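/- Let p ∈ [max{1, 1/q}, ∞) and assume that sup_{M∈ℕ} sup_{t∈[0,T)} ‖U(O^M_t) + R(O^M_t)‖_{L^{pq}(P;ℝ)} < ∞. Then sup_{M∈ℕ} sup_{t∈[0,T)} ‖F(Y^M_t)‖_{L^p(P;H)} < ∞. (Corollary 5.3 of the paper: uniform L^p bound for the nonlinearity evaluated along the approximations.) -/

import Mathlib

/-!
Write `Z = Y - O` and `h = T / M`. On a grid step `(k h, t]` the semigroup property turns the
scheme into `Z t = S_{kh,t} (Z (k h) + (t - k h) G (Z (k h) + O (k h)))`, `G` the truncated `F`,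
so the Lyapunov hypothesis gives
`U (Z t) ≤ e^{c (t - k h)} (U (Z (k h)) + (t - k h) R (O (k h)))`.
A discrete Gronwall argument starting from `Z 0 = 0` yields
`U (Z t) ≤ e^{c T} (U 0 + h ∑_{k < M} R (O (min (k h) t)))`, whose `L^{pq}` norm is at most
`e^{c T} (U 0 + T B)` by Minkowski, `B` being the assumed bound on `‖U (O) + R (O)‖_{L^{pq}}`.
The growth bound `‖F (Z + O)‖ ≤ c (1 + U (Z)^q + U (O)^q)` and `‖X^q‖_{L^p} = ‖X‖_{L^{pq}}^q`
finish the proof, uniformly in `M` and `t`.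
-/

open MeasureTheory Set

/-- `⌊t⌋_h = max({0, h, −h, 2h, −2h, …} ∩ (−∞, t])` for `h > 0`. -/
noncomputable def hfloor (h t : ℝ) : ℝ := h * (⌊t / h⌋ : ℝ)

open scoped ENNReal

section hfloor

variable {h : ℝ}

lemma hfloor_le (hh : 0 < h) (s : ℝ) : hfloor h s ≤ s :=
  calc h * (⌊s / h⌋ : ℝ) ≤ h * (s / h) := mul_le_mul_of_nonneg_left (Int.floor_le _) hh.le
    _ = s := mul_div_cancel₀ s hh.ne'

lemma hfloor_nonneg (hh : 0 < h) {s : ℝ} (hs : 0 ≤ s) : 0 ≤ hfloor h s :=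
  mul_nonneg hh.le (Int.cast_nonneg (Int.floor_nonneg.2 (div_nonneg hs hh.le)))

lemma hfloor_eq_natCast_mul (hh : 0 < h) {j : ℕ} {s : ℝ} (hjs : j * h ≤ s)
    (hsj : s < (j + 1) * h) : hfloor h s = j * h := by
  have : ⌊s / h⌋ = j := by
    rw [Int.floor_eq_iff]
    push_cast
    exact ⟨(le_div_iff₀ hh).2 hjs, (div_lt_iff₀ hh).2 hsj⟩
  rw [hfloor, this, mul_comm]
  rfl

end hfloor

lemma discrete_gronwall_exp_mul {a d r : ℕ → ℝ} {κ : ℝ} (hκ : 0 ≤ κ) (hd : ∀ i, 0 ≤ d i)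
    (hr : ∀ i, 0 ≤ r i) {n : ℕ}
    (step : ∀ j < n, a (j + 1) ≤ Real.exp (κ * d j) * (a j + d j * r j)) :
    a n ≤ Real.exp (κ * ∑ i ∈ Finset.range n, d i) * (a 0 + ∑ i ∈ Finset.range n, d i * r i) := by
  induction n with
  | zero => simp
  | succ n ih =>
    have ih := ih fun j hj => step j (Nat.lt_succ_of_lt hj)
    have hexp : 1 ≤ Real.exp (κ * ∑ i ∈ Finset.range n, d i) :=
      Real.one_le_exp (mul_nonneg hκ (Finset.sum_nonneg fun i _ => hd i))
    have hdr : d n * r n ≤ Real.exp (κ * ∑ i ∈ Finset.range n, d i) * (d n * r n) :=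
      le_mul_of_one_le_left (mul_nonneg (hd n) (hr n)) hexp
    calc a (n + 1) ≤ Real.exp (κ * d n) * (a n + d n * r n) := step n n.lt_succ_self
      _ ≤ Real.exp (κ * d n) * (Real.exp (κ * ∑ i ∈ Finset.range n, d i) *
            (a 0 + ∑ i ∈ Finset.range n, d i * r i) + d n * r n) := by gcongr
      _ ≤ Real.exp (κ * d n) * (Real.exp (κ * ∑ i ∈ Finset.range n, d i) *
            (a 0 + ∑ i ∈ Finset.range n, d i * r i + d n * r n)) := by
        gcongr
        linarith
      _ = _ := by
        rw [Finset.sum_range_succ, Finset.sum_range_succ, ← mul_assoc, ← Real.exp_add, add_assoc]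
        ring_nf

section MildScheme

variable {H V : Type*} [NormedAddCommGroup H] [NormedSpace ℝ H]
  [NormedAddCommGroup V] [NormedSpace ℝ V]
  {S : ℝ → ℝ → H →L[ℝ] V} {ι : V →L[ℝ] H} {h T : ℝ}

lemma setIntegral_Ioc_hfloor_eq_apply [CompleteSpace V] (hh : 0 < h)
    (hS : ∀ r₁ r₂ r₃ : ℝ, 0 ≤ r₁ → r₁ < r₂ → r₂ < r₃ → r₃ ≤ T →
      S r₁ r₃ = (S r₂ r₃).comp (ι.comp (S r₁ r₂)))
    {f : ℝ → H} {r t : ℝ} (hrt : r < t) (htT : t ≤ T)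
    (hf : IntegrableOn (fun s => S (hfloor h s) r (f (hfloor h s))) (Ioc 0 r)) :
    ∫ s in Ioc 0 r, S (hfloor h s) t (f (hfloor h s)) =
      S r t (ι (∫ s in Ioc 0 r, S (hfloor h s) r (f (hfloor h s)))) := by
  rw [integral_Ioc_eq_integral_Ioo, integral_Ioc_eq_integral_Ioo]
  calc ∫ s in Ioo 0 r, S (hfloor h s) t (f (hfloor h s))
      = ∫ s in Ioo 0 r, ((S r t).comp ι) (S (hfloor h s) r (f (hfloor h s))) :=
        setIntegral_congr_fun measurableSet_Ioo fun s hs => by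
          rw [hS _ r t (hfloor_nonneg hh hs.1.le) ((hfloor_le hh s).trans_lt hs.2) hrt htT]
          rfl
    _ = _ := ((S r t).comp ι).integral_comp_comm (hf.mono_set Ioo_subset_Ioc_self)

lemma setIntegral_Ioc_hfloor_eq_smul [CompleteSpace V] (hh : 0 < h) {f : ℝ → H} {j : ℕ} {t : ℝ}
    (hjt : j * h ≤ t) (htj : t ≤ (j + 1) * h) :
    ∫ s in Ioc (j * h) t, S (hfloor h s) t (f (hfloor h s)) =
      (t - j * h) • S (j * h) t (f (j * h)) := by
  rw [integral_Ioc_eq_integral_Ioo,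
    setIntegral_congr_fun measurableSet_Ioo fun s hs => by
      rw [hfloor_eq_natCast_mul hh hs.1.le (hs.2.trans_le htj)],
    setIntegral_const, measureReal_def, Real.volume_Ioo, ENNReal.toReal_ofReal (by linarith)]

def MildSchemeAt (S : ℝ → ℝ → H →L[ℝ] V) (G : V → H) (h : ℝ) (y o : ℝ → V) (r : ℝ) : Prop :=
  IntegrableOn (fun s => S (hfloor h s) r (G (y (hfloor h s)))) (Ioc 0 r) ∧
    y r = (∫ s in Ioc 0 r, S (hfloor h s) r (G (y (hfloor h s)))) + o r

variable {G : V → H} {y o : ℝ → V}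

lemma MildSchemeAt.eq_at_zero (h0 : MildSchemeAt S G h y o 0) : y 0 = o 0 := by
  simpa using h0.2

lemma MildSchemeAt.sub_eq_apply [CompleteSpace V] (hh : 0 < h)
    (hS : ∀ r₁ r₂ r₃ : ℝ, 0 ≤ r₁ → r₁ < r₂ → r₂ < r₃ → r₃ ≤ T →
      S r₁ r₃ = (S r₂ r₃).comp (ι.comp (S r₁ r₂)))
    {j : ℕ} {t : ℝ} (hjt : j * h < t) (htj : t ≤ (j + 1) * h) (htT : t ≤ T)
    (hj : MildSchemeAt S G h y o (j * h)) (ht : MildSchemeAt S G h y o t) :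
    y t - o t = S (j * h) t (ι (y (j * h) - o (j * h)) + (t - j * h) • G (y (j * h))) := by
  have hjh : 0 ≤ (j : ℝ) * h := by positivity
  rw [sub_eq_of_eq_add ht.2, sub_eq_of_eq_add hj.2, ← Ioc_union_Ioc_eq_Ioc hjh hjt.le,
    setIntegral_union (Ioc_disjoint_Ioc_of_le le_rfl) measurableSet_Ioc
      (ht.1.mono_set (Ioc_subset_Ioc_right hjt.le)) (ht.1.mono_set (Ioc_subset_Ioc_left hjh)),
    setIntegral_Ioc_hfloor_eq_apply (f := fun r => G (y r)) hh hS hjt htT hj.1,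
    setIntegral_Ioc_hfloor_eq_smul (f := fun r => G (y r)) hh hjt.le htj, map_add, map_smul]

lemma MildSchemeAt.apply_sub_le_step [CompleteSpace V] {U R : V → ℝ} {c : ℝ} (hh : 0 < h)
    (hS : ∀ r₁ r₂ r₃ : ℝ, 0 ≤ r₁ → r₁ < r₂ → r₂ < r₃ → r₃ ≤ T →
      S r₁ r₃ = (S r₂ r₃).comp (ι.comp (S r₁ r₂)))
    {j : ℕ} {t : ℝ} (hjt : j * h < t) (htj : t ≤ (j + 1) * h) (htT : t ≤ T)
    (hL : ∀ u v : V, U (S (j * h) t (ι u + (t - j * h) • G (u + v))) ≤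
      Real.exp (c * (t - j * h)) * (U u + (t - j * h) * R v))
    (hj : MildSchemeAt S G h y o (j * h)) (ht : MildSchemeAt S G h y o t) :
    U (y t - o t) ≤
      Real.exp (c * (t - j * h)) * (U (y (j * h) - o (j * h)) + (t - j * h) * R (o (j * h))) := by
  rw [hj.sub_eq_apply hh hS hjt htj htT ht]
  simpa only [sub_add_cancel] using hL (y (j * h) - o (j * h)) (o (j * h))

-- Discrete Gronwall along the times `min (j * h) t`, `j = 0, …, N`.
lemma apply_sub_le_exp_mul_of_mildSchemeAt [CompleteSpace V] {U R : V → ℝ} {c : ℝ} {N : ℕ}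
    (hh : 0 < h) (hc : 0 ≤ c) (hR : ∀ v, 0 ≤ R v)
    (hS : ∀ r₁ r₂ r₃ : ℝ, 0 ≤ r₁ → r₁ < r₂ → r₂ < r₃ → r₃ ≤ T →
      S r₁ r₃ = (S r₂ r₃).comp (ι.comp (S r₁ r₂)))
    (hL : ∀ u v : V, ∀ k : ℕ, k < N → ∀ t : ℝ, k * h < t → t ≤ (k + 1) * h →
      U (S (k * h) t (ι u + (t - k * h) • G (u + v))) ≤
        Real.exp (c * (t - k * h)) * (U u + (t - k * h) * R v))
    {t : ℝ} (ht0 : 0 ≤ t) (htT : t ≤ T) (htN : t ≤ N * h)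
    (hy : ∀ j : ℕ, MildSchemeAt S G h y o (min (j * h) t)) :
    U (y t - o t) ≤
      Real.exp (c * t) * (U 0 + h * ∑ i ∈ Finset.range N, R (o (min (i * h) t))) := by
  set τ : ℕ → ℝ := fun j => min (j * h) t with hτ
  have hτ_mono (j : ℕ) : τ j ≤ τ (j + 1) :=
    min_le_min_right _ (mul_le_mul_of_nonneg_right (by push_cast; linarith) hh.le)
  have hτ_step (j : ℕ) : τ (j + 1) ≤ τ j + h := by
    rw [hτ, ← min_add_add_right]
    exact min_le_min (by push_cast; linarith) (by linarith)
  have hgronwall := discrete_gronwall_exp_mul (a := fun j => U (y (τ j) - o (τ j)))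
    (d := fun j => τ (j + 1) - τ j) (r := fun j => R (o (τ j))) (n := N) hc
    (fun j => sub_nonneg.2 (hτ_mono j)) (fun j => hR _) fun j _ => by
      rcases (hτ_mono j).eq_or_lt with heq | hlt
      · simp [← heq]
      have hjt : j * h < t := lt_of_not_ge fun hle =>
        hlt.not_ge ((min_le_right _ _).trans (min_eq_right hle).ge)
      have hτj : τ j = j * h := min_eq_left hjt.le
      have hjN : j < N := Nat.cast_lt.1 (lt_of_mul_lt_mul_right (hjt.trans_le htN) hh.le)
      rw [hτj] at hlt ⊢
      have htj : τ (j + 1) ≤ (j + 1) * h := (min_le_left _ _).trans_eq (by push_cast; ring)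
      exact MildSchemeAt.apply_sub_le_step hh hS hlt htj ((min_le_right _ _).trans htT)
        (hL · · j hjN _ hlt htj) (hτj ▸ hy j) (hy (j + 1))
  have hτN : τ N = t := min_eq_right htN
  have hτ0 : τ 0 = 0 := by simp [hτ, ht0]
  have hyo0 : y 0 - o 0 = 0 := sub_eq_zero.2 (MildSchemeAt.eq_at_zero (by simpa [ht0] using hy 0))
  simp only [Finset.sum_range_sub τ, hτN, hτ0, hyo0, sub_zero] at hgronwall
  have hsum : ∑ i ∈ Finset.range N, (τ (i + 1) - τ i) * R (o (τ i)) ≤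
      h * ∑ i ∈ Finset.range N, R (o (τ i)) := by
    rw [Finset.mul_sum]
    exact Finset.sum_le_sum fun i _ =>
      mul_le_mul_of_nonneg_right (by linarith [hτ_step i]) (hR _)
  exact hgronwall.trans (by gcongr)

end MildScheme

section LpBounds

variable {Ω : Type*} [MeasurableSpace Ω] {μ : Measure Ω}

lemma eLpNorm_le_of_norm_le_one_add_rpow_add_rpow [IsProbabilityMeasure μ] {E : Type*}
    [NormedAddCommGroup E] {f : Ω → E} {X W : Ω → ℝ} {c p q : ℝ} (hp : 1 ≤ p) (hq : 0 < q)
    (hX : AEStronglyMeasurable X μ) (hW : AEStronglyMeasurable W μ)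
    (hf : ∀ᵐ ω ∂μ, ‖f ω‖ ≤ c * (1 + ‖X ω‖ ^ q + ‖W ω‖ ^ q)) :
    eLpNorm f (ENNReal.ofReal p) μ ≤ ‖c‖ₑ * (1 + eLpNorm X (ENNReal.ofReal (p * q)) μ ^ q +
      eLpNorm W (ENNReal.ofReal (p * q)) μ ^ q) := by
  have hp' : 1 ≤ ENNReal.ofReal p := by simpa using ENNReal.ofReal_le_ofReal hp
  have hXq : AEStronglyMeasurable (fun ω => ‖X ω‖ ^ q) μ :=
    (hX.norm.aemeasurable.pow_const q).aestronglyMeasurable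
  have hWq : AEStronglyMeasurable (fun ω => ‖W ω‖ ^ q) μ :=
    (hW.norm.aemeasurable.pow_const q).aestronglyMeasurable
  have hone : eLpNorm (fun _ => (1 : ℝ)) (ENNReal.ofReal p) μ ≤ 1 := by
    simp [eLpNorm_const _ (by positivity : ENNReal.ofReal p ≠ 0) (IsProbabilityMeasure.ne_zero μ)]
  calc eLpNorm f (ENNReal.ofReal p) μ
      ≤ eLpNorm (c • ((fun _ => (1 : ℝ)) + (fun ω => ‖X ω‖ ^ q) + fun ω => ‖W ω‖ ^ q))
          (ENNReal.ofReal p) μ := eLpNorm_mono_ae_real hf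
    _ ≤ ‖c‖ₑ * (eLpNorm (fun _ => (1 : ℝ)) (ENNReal.ofReal p) μ +
          eLpNorm (fun ω => ‖X ω‖ ^ q) (ENNReal.ofReal p) μ +
          eLpNorm (fun ω => ‖W ω‖ ^ q) (ENNReal.ofReal p) μ) := by
      refine eLpNorm_const_smul_le.trans (mul_le_mul_right ?_ _)
      refine (eLpNorm_add_le (aestronglyMeasurable_const.add hXq) hWq hp').trans ?_
      gcongr
      exact eLpNorm_add_le aestronglyMeasurable_const hXq hp'
    _ ≤ _ := by
      rw [eLpNorm_norm_rpow _ hq, eLpNorm_norm_rpow _ hq,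
        ← ENNReal.ofReal_mul (by linarith)]
      gcongr

lemma eLpNorm_sum_le_card_mul {E ι : Type*} [NormedAddCommGroup E] {s : Finset ι}
    {f : ι → Ω → E} {p : ℝ≥0∞} {B : ℝ≥0∞} (hf : ∀ i ∈ s, AEStronglyMeasurable (f i) μ)
    (hp : 1 ≤ p) (hB : ∀ i ∈ s, eLpNorm (f i) p μ ≤ B) :
    eLpNorm (∑ i ∈ s, f i) p μ ≤ s.card * B :=
  calc eLpNorm (∑ i ∈ s, f i) p μ ≤ ∑ i ∈ s, eLpNorm (f i) p μ := eLpNorm_sum_le hf hp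
    _ ≤ ∑ _i ∈ s, B := Finset.sum_le_sum hB
    _ = s.card * B := by rw [Finset.sum_const, nsmul_eq_mul]


lemma eLpNorm_mul_add_mul_sum_le [IsProbabilityMeasure μ] {ι : Type*} {s : Finset ι}
    {g : ι → Ω → ℝ} {a b h : ℝ} {r B : ℝ≥0∞} (ha : 0 ≤ a) (hb : 0 ≤ b) (hh : 0 ≤ h)
    (hr : 1 ≤ r) (hg : ∀ i ∈ s, AEStronglyMeasurable (g i) μ)
    (hB : ∀ i ∈ s, eLpNorm (g i) r μ ≤ B) :
    eLpNorm (fun ω => a * (b + h * ∑ i ∈ s, g i ω)) r μ ≤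
      ENNReal.ofReal a * (ENNReal.ofReal b + ENNReal.ofReal (h * s.card) * B) := by
  have hsum : AEStronglyMeasurable (∑ i ∈ s, g i) μ := Finset.aestronglyMeasurable_sum _ hg
  have hconst : eLpNorm (fun _ => b) r μ ≤ ENNReal.ofReal b := by
    rcases eq_or_ne r 0 with rfl | hr0
    · simp
    simp [eLpNorm_const _ hr0 (IsProbabilityMeasure.ne_zero μ), Real.enorm_eq_ofReal hb]
  calc eLpNorm (fun ω => a * (b + h * ∑ i ∈ s, g i ω)) r μ
      = eLpNorm (a • ((fun _ => b) + h • ∑ i ∈ s, g i)) r μ := by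
        congr 1; ext ω; simp [Finset.sum_apply]
    _ ≤ ‖a‖ₑ * (eLpNorm (fun _ => b) r μ + ‖h‖ₑ * eLpNorm (∑ i ∈ s, g i) r μ) := by
      refine eLpNorm_const_smul_le.trans (mul_le_mul_right ?_ _)
      exact (eLpNorm_add_le aestronglyMeasurable_const (hsum.const_smul h) hr).trans
        (add_le_add le_rfl eLpNorm_const_smul_le)
    _ ≤ ENNReal.ofReal a * (ENNReal.ofReal b + ENNReal.ofReal h * (s.card * B)) := by
      rw [Real.enorm_eq_ofReal ha, Real.enorm_eq_ofReal hh]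
      gcongr
      exact eLpNorm_sum_le_card_mul hg hr hB
    _ = _ := by
      rw [ENNReal.ofReal_mul hh, ENNReal.ofReal_natCast, mul_assoc]

end LpBounds

theorem eLpNorm_apply_le_of_mildSchemeAt {H V Ω : Type*} [NormedAddCommGroup H]
    [NormedSpace ℝ H] [NormedAddCommGroup V] [NormedSpace ℝ V] [CompleteSpace V]
    [MeasurableSpace V] [BorelSpace V] [MeasurableSpace Ω] {P : Measure Ω} [IsProbabilityMeasure P]
    {S : ℝ → ℝ → H →L[ℝ] V} {ι : V →L[ℝ] H} {F G : V → H} {U R : V → ℝ} {c q p h T : ℝ}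
    {B : ℝ≥0∞} {N : ℕ} (hh : 0 < h) (hNT : N * h = T) (hc : 0 ≤ c) (hq : 0 < q) (hp : 1 ≤ p)
    (hpq : 1 ≤ p * q) (hU0 : ∀ v, 0 ≤ U v) (hR0 : ∀ v, 0 ≤ R v) (hUm : Measurable U)
    (hRm : Measurable R) (hF : ∀ u v : V, ‖F (u + v)‖ ≤ c * (1 + U u ^ q + U v ^ q))
    (hS : ∀ r₁ r₂ r₃ : ℝ, 0 ≤ r₁ → r₁ < r₂ → r₂ < r₃ → r₃ ≤ T →
      S r₁ r₃ = (S r₂ r₃).comp (ι.comp (S r₁ r₂)))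
    (hL : ∀ u v : V, ∀ k : ℕ, k < N → ∀ t : ℝ, k * h < t → t ≤ (k + 1) * h →
      U (S (k * h) t (ι u + (t - k * h) • G (u + v))) ≤
        Real.exp (c * (t - k * h)) * (U u + (t - k * h) * R v))
    {y o : ℝ → Ω → V} (ho : ∀ r, StronglyMeasurable (o r))
    (hy : ∀ r ∈ Icc 0 T, ∀ᵐ ω ∂P, MildSchemeAt S G h (y · ω) (o · ω) r)
    (hB : ∀ r ∈ Ico 0 T,
      eLpNorm (fun ω => U (o r ω) + R (o r ω)) (ENNReal.ofReal (p * q)) P ≤ B)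
    {t : ℝ} (ht : t ∈ Ico 0 T) :
    eLpNorm (fun ω => F (y t ω)) (ENNReal.ofReal p) P ≤ ‖c‖ₑ * (1 +
      (ENNReal.ofReal (Real.exp (c * T)) * (ENNReal.ofReal (U 0) + ENNReal.ofReal T * B)) ^ q +
        B ^ q) := by
  obtain ⟨ht0, htT⟩ := ht
  have hτ (i : ℕ) : min (i * h) t ∈ Ico 0 T :=
    ⟨le_min (by positivity) ht0, (min_le_right _ _).trans_lt htT⟩
  have hUo (r : ℝ) : Measurable fun ω => U (o r ω) := hUm.comp (ho r).measurable
  have hRo (r : ℝ) : Measurable fun ω => R (o r ω) := hRm.comp (ho r).measurable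
  have hRB (r : ℝ) (hr : r ∈ Ico 0 T) :
      eLpNorm (fun ω => R (o r ω)) (ENNReal.ofReal (p * q)) P ≤ B :=
    (eLpNorm_mono_real fun ω => by
      rw [Real.norm_of_nonneg (hR0 _)]; linarith [hU0 (o r ω)]).trans (hB r hr)
  have hUB : eLpNorm (fun ω => U (o t ω)) (ENNReal.ofReal (p * q)) P ≤ B :=
    (eLpNorm_mono_real fun ω => by
      rw [Real.norm_of_nonneg (hU0 _)]; linarith [hR0 (o t ω)]).trans (hB t ⟨ht0, htT⟩)
  set D : Ω → ℝ := fun ω =>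
    Real.exp (c * T) * (U 0 + h * ∑ i ∈ Finset.range N, R (o (min (i * h) t) ω))
  have hA0 (ω : Ω) : 0 ≤ U 0 + h * ∑ i ∈ Finset.range N, R (o (min (i * h) t) ω) :=
    add_nonneg (hU0 0) (mul_nonneg hh.le (Finset.sum_nonneg fun i _ => hR0 _))
  have hD0 (ω : Ω) : 0 ≤ D ω := mul_nonneg (Real.exp_pos _).le (hA0 ω)
  have hpath : ∀ᵐ ω ∂P, ‖F (y t ω)‖ ≤ c * (1 + ‖D ω‖ ^ q + ‖U (o t ω)‖ ^ q) := by
    filter_upwards [ae_all_iff.2 fun j : ℕ => hy _ (Ico_subset_Icc_self (hτ j))] with ω hω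
    have hZ : U (y t ω - o t ω) ≤ D ω :=
      (apply_sub_le_exp_mul_of_mildSchemeAt hh hc hR0 hS hL ht0 htT.le (hNT ▸ htT.le) hω).trans
        (mul_le_mul_of_nonneg_right (Real.exp_le_exp.2 (mul_le_mul_of_nonneg_left htT.le hc))
          (hA0 ω))
    rw [Real.norm_of_nonneg (hD0 ω), Real.norm_of_nonneg (hU0 _)]
    calc ‖F (y t ω)‖ = ‖F ((y t ω - o t ω) + o t ω)‖ := by rw [sub_add_cancel]
      _ ≤ c * (1 + U (y t ω - o t ω) ^ q + U (o t ω) ^ q) := hF _ _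
      _ ≤ c * (1 + D ω ^ q + U (o t ω) ^ q) := by have := hU0 (y t ω - o t ω); gcongr
  refine (eLpNorm_le_of_norm_le_one_add_rpow_add_rpow hp hq ?_ (hUo t).aestronglyMeasurable
    hpath).trans ?_
  · exact (measurable_const.mul (measurable_const.add (measurable_const.mul
      (Finset.measurable_sum _ fun i _ => hRo _)))).aestronglyMeasurable
  gcongr
  have hDB := eLpNorm_mul_add_mul_sum_le (μ := P) (s := Finset.range N) (Real.exp_pos (c * T)).le
    (hU0 0) hh.le (by simpa using ENNReal.ofReal_le_ofReal hpq)
    (fun i _ => (hRo _).aestronglyMeasurable) fun i _ => hRB _ (hτ i)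
  have hhN : h * (Finset.range N).card = T := by rw [Finset.card_range, mul_comm, hNT]
  rwa [hhN] at hDB

theorem stmt7_general
    (T c q α : ℝ) (hT : 0 < T) (hc : 0 < c) (hq : 0 < q)
    {H V : Type*}
    [NormedAddCommGroup H] [InnerProductSpace ℝ H]
    [NormedAddCommGroup V] [NormedSpace ℝ V] [CompleteSpace V]
    [MeasurableSpace V] [BorelSpace V]
    (ι : V →L[ℝ] H)
    (F : V → H)
    (U R : V → ℝ)
    (hU0 : ∀ v, 0 ≤ U v) (hR0 : ∀ v, 0 ≤ R v)
    (hUm : Measurable U) (hRm : Measurable R)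
    (S : ℕ → ℝ → ℝ → (H →L[ℝ] V))
    (hFgrowth : ∀ u v : V, ‖F (u + v)‖ ≤ c * (1 + U u ^ q + U v ^ q))
    (hSsemi : ∀ M : ℕ, 1 ≤ M → ∀ r1 r2 r3 : ℝ, 0 ≤ r1 → r1 < r2 → r2 < r3 → r3 ≤ T →
      S M r1 r3 = (S M r2 r3).comp (ι.comp (S M r1 r2)))
    (hLyap : ∀ M : ℕ, 1 ≤ M → ∀ u v : V, ∀ k : ℕ, k < M → ∀ t : ℝ,
      (k : ℝ) * T / M < t → t ≤ ((k : ℝ) + 1) * T / M →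
      U (S M ((k : ℝ) * T / M) t
          (ι u + (t - (k : ℝ) * T / M) •
            (if ‖u + v‖ ≤ ((M : ℝ) / T) ^ α then F (u + v) else 0)))
        ≤ Real.exp (c * (t - (k : ℝ) * T / M)) * (U u + (t - (k : ℝ) * T / M) * R v))
    {Ω : Type*} [MeasurableSpace Ω] (P : Measure Ω) [IsProbabilityMeasure P]
    (O Y : ℕ → ℝ → Ω → V)
    (hOsm : ∀ M : ℕ, ∀ t : ℝ, StronglyMeasurable fun ω => O M t ω)
    (hYeq : ∀ M : ℕ, 1 ≤ M → ∀ t ∈ Set.Icc (0 : ℝ) T, ∀ᵐ ω ∂P,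
      IntegrableOn
          (fun s => S M (hfloor (T / M) s) t
            (if ‖Y M (hfloor (T / M) s) ω‖ ≤ ((M : ℝ) / T) ^ α
              then F (Y M (hfloor (T / M) s) ω) else 0))
          (Set.Ioc 0 t) ∧
        Y M t ω =
          (∫ s in Set.Ioc (0 : ℝ) t, S M (hfloor (T / M) s) t
            (if ‖Y M (hfloor (T / M) s) ω‖ ≤ ((M : ℝ) / T) ^ α
              then F (Y M (hfloor (T / M) s) ω) else 0)) + O M t ω)
    (p : ℝ) (hp : max 1 (1 / q) ≤ p)
    (h2 : (⨆ (M : ℕ) (_ : 1 ≤ M) (t : ℝ) (_ : t ∈ Set.Ico (0 : ℝ) T),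
        eLpNorm (fun ω => U (O M t ω) + R (O M t ω)) (ENNReal.ofReal (p * q)) P) < ⊤) :
    (⨆ (M : ℕ) (_ : 1 ≤ M) (t : ℝ) (_ : t ∈ Set.Ico (0 : ℝ) T),
        eLpNorm (fun ω => F (Y M t ω)) (ENNReal.ofReal p) P) < ⊤ := by
  have hp1 : 1 ≤ p := (le_max_left _ _).trans hp
  have hpq : 1 ≤ p * q := by
    have h1q : 1 / q ≤ p := (le_max_right _ _).trans hp
    rwa [div_le_iff₀ hq] at h1q
  set B := ⨆ (M : ℕ) (_ : 1 ≤ M) (t : ℝ) (_ : t ∈ Set.Ico (0 : ℝ) T),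
    eLpNorm (fun ω => U (O M t ω) + R (O M t ω)) (ENNReal.ofReal (p * q)) P
  have hK : ‖c‖ₑ * (1 + (ENNReal.ofReal (Real.exp (c * T)) *
      (ENNReal.ofReal (U 0) + ENNReal.ofReal T * B)) ^ q + B ^ q) < ⊤ := by
    have := h2.ne
    finiteness
  refine lt_of_le_of_lt (iSup₂_le fun M hM => iSup₂_le fun t ht => ?_) hK
  have hM0 : (0 : ℝ) < M := by exact_mod_cast hM
  exact eLpNorm_apply_le_of_mildSchemeAt
    (G := fun w => if ‖w‖ ≤ ((M : ℝ) / T) ^ α then F w else 0) (B := B)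
    (div_pos hT hM0) (mul_div_cancel₀ T hM0.ne') hc.le hq
    hp1 hpq hU0 hR0 hUm hRm hFgrowth (hSsemi M hM) (by simpa only [mul_div_assoc] using hLyap M hM)
    (hOsm M) (hYeq M hM) (fun r hr => le_iSup₂_of_le M hM (le_iSup₂_of_le r hr le_rfl)) ht

theorem stmt7
    (T c q α : ℝ) (hT : 0 < T) (hc : 0 < c) (hq : 0 < q) (hα : 0 < α)
    {H V : Type*}
    [NormedAddCommGroup H] [InnerProductSpace ℝ H] [CompleteSpace H]
    [TopologicalSpace.SeparableSpace H] [MeasurableSpace H] [BorelSpace H]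
    [NormedAddCommGroup V] [NormedSpace ℝ V] [CompleteSpace V]
    [TopologicalSpace.SeparableSpace V] [MeasurableSpace V] [BorelSpace V]
    (ι : V →L[ℝ] H) (hι_inj : Function.Injective ι) (hι_dense : DenseRange ι)
    (F : V → H) (hFc : Continuous F)
    (U R : V → ℝ)
    (hU0 : ∀ v, 0 ≤ U v) (hR0 : ∀ v, 0 ≤ R v)
    (hUm : Measurable U) (hRm : Measurable R)
    (S : ℕ → ℝ → ℝ → (H →L[ℝ] V))
    (hSm : ∀ M : ℕ, ∀ x : H, Measurable fun p : ℝ × ℝ => S M p.1 p.2 x)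
    (hFgrowth : ∀ u v : V, ‖F (u + v)‖ ≤ c * (1 + U u ^ q + U v ^ q))
    (hSsemi : ∀ M : ℕ, 1 ≤ M → ∀ r1 r2 r3 : ℝ, 0 ≤ r1 → r1 < r2 → r2 < r3 → r3 ≤ T →
      S M r1 r3 = (S M r2 r3).comp (ι.comp (S M r1 r2)))
    (hLyap : ∀ M : ℕ, 1 ≤ M → ∀ u v : V, ∀ k : ℕ, k < M → ∀ t : ℝ,
      (k : ℝ) * T / M < t → t ≤ ((k : ℝ) + 1) * T / M →
      U (S M ((k : ℝ) * T / M) t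
          (ι u + (t - (k : ℝ) * T / M) •
            (if ‖u + v‖ ≤ ((M : ℝ) / T) ^ α then F (u + v) else 0)))
        ≤ Real.exp (c * (t - (k : ℝ) * T / M)) * (U u + (t - (k : ℝ) * T / M) * R v))
    {Ω : Type*} [MeasurableSpace Ω] (P : Measure Ω) [IsProbabilityMeasure P]
    (O Y : ℕ → ℝ → Ω → V)
    (hOsm : ∀ M : ℕ, ∀ t : ℝ, StronglyMeasurable fun ω => O M t ω)
    (hYsm : ∀ M : ℕ, ∀ t : ℝ, StronglyMeasurable fun ω => Y M t ω)
    (hYeq : ∀ M : ℕ, 1 ≤ M → ∀ t ∈ Set.Icc (0 : ℝ) T, ∀ᵐ ω ∂P,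
      IntegrableOn
          (fun s => S M (hfloor (T / M) s) t
            (if ‖Y M (hfloor (T / M) s) ω‖ ≤ ((M : ℝ) / T) ^ α
              then F (Y M (hfloor (T / M) s) ω) else 0))
          (Set.Ioc 0 t) ∧
        Y M t ω =
          (∫ s in Set.Ioc (0 : ℝ) t, S M (hfloor (T / M) s) t
            (if ‖Y M (hfloor (T / M) s) ω‖ ≤ ((M : ℝ) / T) ^ α
              then F (Y M (hfloor (T / M) s) ω) else 0)) + O M t ω)
    (p : ℝ) (hp : max 1 (1 / q) ≤ p)
    (h2 : (⨆ (M : ℕ) (_ : 1 ≤ M) (t : ℝ) (_ : t ∈ Set.Ico (0 : ℝ) T),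
        eLpNorm (fun ω => U (O M t ω) + R (O M t ω)) (ENNReal.ofReal (p * q)) P) < ⊤) :
    (⨆ (M : ℕ) (_ : 1 ≤ M) (t : ℝ) (_ : t ∈ Set.Ico (0 : ℝ) T),
        eLpNorm (fun ω => F (Y M t ω)) (ENNReal.ofReal p) P) < ⊤ :=
  stmt7_general T c q α hT hc hq ι F U R hU0 hR0 hUm hRm S hFgrowth hSsemi hLyap P O Y hOsm hYeq p
    hp h2
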